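/- Let Σ be a finite simplicial complex and let L be a valid interleaved removal sequence on Σ. If the operation at step i removes a pair (σ', τ') that is a reduction pair in the remaining family at step i, and the operation at some later step j > i removes a pair (σ, τ) (a coreduction or reduction pair in the remaining family at step j), then σ' is not an immediate face of τ. (Condition 2 in the proof of Proposition 2: the last inserted pair is maximal with respect to the pairs already inserted that originate from reductions.) -/

import Mathlib

open Finset

variable {α : Type*}

/-- `σ` is an immediate face of `τ`. -/
def ImmFace (σ τ : Finset α) : Prop :=
  σ ⊆ τ ∧ σ.card + 1 = τ.card

/-- A simplicial complex: a family of nonempty finsets closed under nonempty subsets. -/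
def IsComplex (S : Set (Finset α)) : Prop :=
  (∀ σ ∈ S, σ.Nonempty) ∧ ∀ τ ∈ S, ∀ σ : Finset α, σ ⊆ τ → σ.Nonempty → σ ∈ S

/-- Immediate boundary of `τ` in the family `S`. -/
def bd (S : Set (Finset α)) (τ : Finset α) : Set (Finset α) :=
  {σ ∈ S | ImmFace σ τ}

/-- Immediate coboundary of `σ` in the family `S`. -/
def cbd (S : Set (Finset α)) (σ : Finset α) : Set (Finset α) :=
  {τ ∈ S | ImmFace σ τ}

/-- `(σ, τ)` is a coreduction pair in `S`. -/
def CoredPair (S : Set (Finset α)) (σ τ : Finset α) : Prop :=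
  σ ∈ S ∧ τ ∈ S ∧ ImmFace σ τ ∧ bd S τ = {σ}

/-- `(σ, τ)` is a reduction pair in `S`. -/
def RedPair (S : Set (Finset α)) (σ τ : Finset α) : Prop :=
  σ ∈ S ∧ τ ∈ S ∧ ImmFace σ τ ∧ cbd S σ = {τ}

/-- `σ` is a free simplex in `S`. -/
def FreeSimplex (S : Set (Finset α)) (σ : Finset α) : Prop :=
  σ ∈ S ∧ bd S σ = ∅

/-- `σ` is a top simplex in `S`. -/
def TopSimplex (S : Set (Finset α)) (σ : Finset α) : Prop :=
  σ ∈ S ∧ cbd S σ = ∅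

/-- `S'` is an upward-closed subfamily of `S`. -/
def UpClosedIn (S S' : Set (Finset α)) : Prop :=
  S' ⊆ S ∧ ∀ σ ∈ S', ∀ τ ∈ S, σ ⊆ τ → τ ∈ S'

/-- An operation: removal of a pair of simplices, or of a single simplex. -/
abbrev Op (α : Type*) := (Finset α × Finset α) ⊕ Finset α

/-- Excise the simplices of an operation from a family. -/
def removeOp (S : Set (Finset α)) : Op α → Set (Finset α)
  | Sum.inl (σ, τ) => S \ {σ, τ}
  | Sum.inr σ => S \ {σ}

/-- Remaining family after performing a list of operations in order. -/
def remaining (S : Set (Finset α)) (L : List (Op α)) : Set (Finset α) :=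
  L.foldl removeOp S

/-- A coreduction-based removal sequence: every pair is a coreduction pair and
every single simplex is free, in the current remaining family. -/
def IsCoredSeq (S : Set (Finset α)) : List (Op α) → Prop
  | [] => True
  | o :: L =>
      (match o with
        | Sum.inl (σ, τ) => CoredPair S σ τ
        | Sum.inr σ => FreeSimplex S σ) ∧ IsCoredSeq (removeOp S o) L

/-- A reduction-based removal sequence: every pair is a reduction pair and
every single simplex is top, in the current remaining family. -/
def IsRedSeq (S : Set (Finset α)) : List (Op α) → Prop
  | [] => True
  | o :: L =>
      (match o with
        | Sum.inl (σ, τ) => RedPair S σ τ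
        | Sum.inr σ => TopSimplex S σ) ∧ IsRedSeq (removeOp S o) L

/-- A valid interleaved removal sequence: every pair is a coreduction or
reduction pair, and every single simplex is free or top, in the current
remaining family. -/
def IsInterSeq (S : Set (Finset α)) : List (Op α) → Prop
  | [] => True
  | o :: L =>
      (match o with
        | Sum.inl (σ, τ) => CoredPair S σ τ ∨ RedPair S σ τ
        | Sum.inr σ => FreeSimplex S σ ∨ TopSimplex S σ) ∧ IsInterSeq (removeOp S o) L

/-- A discrete vector field on `S`: pairs (face, immediate coface) of simplices of `S`,
each simplex of `S` belonging to at most one pair. -/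
def IsDVF (S : Set (Finset α)) (V : Set (Finset α × Finset α)) : Prop :=
  (∀ p ∈ V, p.1 ∈ S ∧ p.2 ∈ S ∧ ImmFace p.1 p.2) ∧
  ∀ σ ∈ S, ∀ p ∈ V, ∀ q ∈ V,
    (σ = p.1 ∨ σ = p.2) → (σ = q.1 ∨ σ = q.2) → p = q

/-- A `V`-path: a nonempty sequence of pairs of `V` such that each `σ_{i+1}` is an
immediate face of `τ_i` different from `σ_i`. -/
def IsVPath (V : Set (Finset α × Finset α)) (P : List (Finset α × Finset α)) : Prop :=
  P ≠ [] ∧ (∀ p ∈ P, p ∈ V) ∧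
  P.Chain' (fun p q => ImmFace q.1 p.2 ∧ q.1 ≠ p.1)

/-- A closed `V`-path: `σ_1` is an immediate face of `τ_r` different from `σ_r`. -/
def IsClosedVPath (V : Set (Finset α × Finset α))
    (P : List (Finset α × Finset α)) : Prop :=
  ∃ hne : P ≠ [], IsVPath V P ∧
    ImmFace (P.head hne).1 (P.getLast hne).2 ∧
    (P.head hne).1 ≠ (P.getLast hne).1

/-- The lower star of a vertex `v` with respect to a vertex function `F`. -/
def lowerStar (S : Set (Finset α)) (F : α → ℝ) (v : α) : Set (Finset α) :=
  {σ ∈ S | v ∈ σ ∧ ∀ w ∈ σ, F v ≤ F w}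

lemma removeOp_subset (S : Set (Finset α)) (o : Op α) : removeOp S o ⊆ S := by
  cases o <;> exact Set.sdiff_subset

lemma remaining_subset (S : Set (Finset α)) (L : List (Op α)) :
    remaining S L ⊆ S := by
  induction L generalizing S with
  | nil => exact subset_rfl
  | cons o L ih => exact (ih (removeOp S o)).trans (removeOp_subset S o)

lemma remaining_append (S : Set (Finset α)) (L₁ L₂ : List (Op α)) :
    remaining S (L₁ ++ L₂) = remaining (remaining S L₁) L₂ :=
  List.foldl_append

lemma remaining_take_succ {S : Set (Finset α)} {L : List (Op α)} {i : ℕ} {o : Op α}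
    (hi : L[i]? = some o) :
    remaining S (L.take (i + 1)) = removeOp (remaining S (L.take i)) o := by
  rw [List.take_add_one, hi, remaining_append]
  rfl

lemma antitone_remaining_take (S : Set (Finset α)) (L : List (Op α)) :
    Antitone fun n => remaining S (L.take n) := by
  refine antitone_nat_of_succ_le fun n => ?_
  simp only [List.take_add_one, remaining_append]
  exact remaining_subset _ _

lemma IsInterSeq.drop {S : Set (Finset α)} {L : List (Op α)} (h : IsInterSeq S L)
    (n : ℕ) : IsInterSeq (remaining S (L.take n)) (L.drop n) := by
  induction L generalizing S n with
  | nil => simpa [remaining] using h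
  | cons o L ih =>
      cases n with
      | zero => simpa [remaining] using h
      | succ n => simpa [remaining] using ih h.2 n

lemma IsInterSeq.mem_remaining_of_getElem?_eq_inl {S : Set (Finset α)} {L : List (Op α)}
    (hL : IsInterSeq S L) {j : ℕ} {σ τ : Finset α} (hj : L[j]? = some (Sum.inl (σ, τ))) :
    τ ∈ remaining S (L.take j) := by
  obtain ⟨hlt, hget⟩ := List.getElem?_eq_some_iff.mp hj
  have hseq := hL.drop j
  rw [List.drop_eq_getElem_cons hlt, hget] at hseq
  rcases hseq.1 with h | h <;> exact h.2.1

lemma RedPair.not_immFace_of_mem_diff {S : Set (Finset α)} {σ' τ' τ : Finset α}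
    (hred : RedPair S σ' τ') (hτ : τ ∈ S \ {σ', τ'}) : ¬ ImmFace σ' τ := by
  intro himm
  have hτcbd : τ ∈ cbd S σ' := ⟨hτ.1, himm⟩
  rw [hred.2.2.2] at hτcbd
  exact hτ.2 (Or.inr hτcbd)

theorem interleaved_reduction_maximal_general {α : Type*}
    (S : Set (Finset α))
    (L : List (Op α)) (hL : IsInterSeq S L)
    (i j : ℕ) (hij : i < j) (σ' τ' σ τ : Finset α)
    (hi : L[i]? = some (Sum.inl (σ', τ')))
    (hred : RedPair (remaining S (L.take i)) σ' τ')
    (hj : L[j]? = some (Sum.inl (σ, τ))) :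
    ¬ ImmFace σ' τ := by
  have hτ : τ ∈ remaining S (L.take (i + 1)) :=
    antitone_remaining_take S L hij (hL.mem_remaining_of_getElem?_eq_inl hj)
  rw [remaining_take_succ hi] at hτ
  exact hred.not_immFace_of_mem_diff hτ

/-- Condition 2 in the proof of Proposition 2: if step `i` of a valid interleaved
removal sequence removes a reduction pair `(σ', τ')` and a later step `j > i`
removes a pair `(σ, τ)`, then `σ'` is not an immediate face of `τ`. -/
theorem interleaved_reduction_maximal {α : Type*} [DecidableEq α]
    (S : Set (Finset α)) (hS : IsComplex S) (hfin : S.Finite)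
    (L : List (Op α)) (hL : IsInterSeq S L)
    (i j : ℕ) (hij : i < j) (σ' τ' σ τ : Finset α)
    (hi : L[i]? = some (Sum.inl (σ', τ')))
    (hred : RedPair (remaining S (L.take i)) σ' τ')
    (hj : L[j]? = some (Sum.inl (σ, τ))) :
    ¬ ImmFace σ' τ :=
  interleaved_reduction_maximal_general S L hL i j hij σ' τ' σ τ hi hred hj
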